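/- Let K' be a profunctor from C' to D', K a profunctor from C to D, and (p, q, φ) a strict morphism from K' to K, i.e. functors p : C' ⥤ C, q : D' ⥤ D and functions φ : K'(c',d') → K(p.obj c', q.obj d') natural in c' and d'. Then (C', D', K', p, q, φ) is a discrete opfibration over K if and only if the induced collage functor Coll(K') ⥤ Coll(K) — acting by p on C'-objects and C'-morphisms, by q on D'-objects and D'-morphisms, and by φ on heteromorphisms — is a discrete opfibration of categories. -/

import Mathlib

/-
A functor is a discrete opfibration exactly when it is bijective on stars, the sets `Σ y, x ⟶ y` of
arrows out of an object. In the collage, the star of `c'` is the star of `c'` in `C'` plus the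
heteromorphisms out of `c'`, and the star of `d'` is its star in `D'` plus nothing; the collage
functor acts on these summands by `p`, `φ` and `q`, and a sum of two maps is bijective iff both are.
-/

open CategoryTheory Opposite

universe u

variable {C D : Type u} [Category.{u} C] [Category.{u} D]

/-- The objects of the collage of a profunctor `K` from `C` to `D`: the disjoint union of the
objects of `C` and of `D`. -/
def Collage (K : Cᵒᵖ × D ⥤ Type u) : Type u := C ⊕ D

/-- The hom-sets of the collage of `K`. -/
def CollageHom (K : Cᵒᵖ × D ⥤ Type u) : Collage K → Collage K → Type u
  | Sum.inl c, Sum.inl c' => c ⟶ c'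
  | Sum.inl c, Sum.inr d => K.obj (op c, d)
  | Sum.inr _, Sum.inl _ => PEmpty
  | Sum.inr d, Sum.inr d' => d ⟶ d'

/-- Identities in the collage. -/
def collageId (K : Cᵒᵖ × D ⥤ Type u) : ∀ x : Collage K, CollageHom K x x
  | Sum.inl c => (𝟙 c : c ⟶ c)
  | Sum.inr d => (𝟙 d : d ⟶ d)

/-- Composition in the collage, given by composition in `C` and `D` and the two-sided action
of `C` and `D` on `K`. -/
def collageComp (K : Cᵒᵖ × D ⥤ Type u) :
    ∀ {x y z : Collage K}, CollageHom K x y → CollageHom K y z → CollageHom K x z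
  | Sum.inl _, Sum.inl _, Sum.inl _, f, g => (f ≫ g : _ ⟶ _)
  | Sum.inl c, Sum.inl c', Sum.inr d, f, k =>
      (K.map (Quiver.Hom.op (X := c) (Y := c') f, 𝟙 d) k : K.obj (op c, d))
  | Sum.inl c, Sum.inr d, Sum.inr d', k, g =>
      (K.map (X := (op c, d)) (Y := (op c, d')) (𝟙 (op c), (g : d ⟶ d')) k : K.obj (op c, d'))
  | Sum.inl _, Sum.inr _, Sum.inl _, _, g => (g : PEmpty).elim
  | Sum.inr _, Sum.inl _, _, f, _ => (f : PEmpty).elim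
  | Sum.inr _, Sum.inr _, Sum.inl _, _, g => (g : PEmpty).elim
  | Sum.inr _, Sum.inr _, Sum.inr _, f, g => (f ≫ g : _ ⟶ _)

theorem collage_id_comp (K : Cᵒᵖ × D ⥤ Type u) :
    ∀ {x y : Collage K} (f : CollageHom K x y),
      collageComp K (collageId K x) f = f
  | Sum.inl _, Sum.inl _, f => Category.id_comp f
  | Sum.inl c, Sum.inr d, k => by
      change K.obj (op c, d) at k
      simp [collageComp, collageId]
      exact FunctorToTypes.map_id_apply K k
  | Sum.inr _, Sum.inl _, f => (f : PEmpty).elim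
  | Sum.inr _, Sum.inr _, f => Category.id_comp f

theorem collage_comp_id (K : Cᵒᵖ × D ⥤ Type u) :
    ∀ {x y : Collage K} (f : CollageHom K x y),
      collageComp K f (collageId K y) = f
  | Sum.inl _, Sum.inl _, f => Category.comp_id f
  | Sum.inl c, Sum.inr d, k => by
      change K.obj (op c, d) at k
      simp [collageComp, collageId]
      exact FunctorToTypes.map_id_apply K k
  | Sum.inr _, Sum.inl _, f => (f : PEmpty).elim
  | Sum.inr _, Sum.inr _, f => Category.comp_id f

theorem collage_assoc (K : Cᵒᵖ × D ⥤ Type u) :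
    ∀ {w x y z : Collage K} (f : CollageHom K w x) (g : CollageHom K x y)
      (h : CollageHom K y z),
      collageComp K (collageComp K f g) h = collageComp K f (collageComp K g h)
  | Sum.inl _, Sum.inl _, Sum.inl _, Sum.inl _, f, g, h => Category.assoc f g h
  | Sum.inl c₁, Sum.inl c₂, Sum.inl c₃, Sum.inr d, f, g, k => by
      change c₁ ⟶ c₂ at f; change c₂ ⟶ c₃ at g; change K.obj (op c₃, d) at k
      simp [collageComp]
      simp only [← FunctorToTypes.map_comp_apply, prod_comp, Category.id_comp, Category.comp_id]
      rfl
  | Sum.inl _, Sum.inl _, Sum.inr _, Sum.inl _, _, _, h => (h : PEmpty).elim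
  | Sum.inl c₁, Sum.inl c₂, Sum.inr d₁, Sum.inr d₂, f, k, g => by
      change c₁ ⟶ c₂ at f; change K.obj (op c₂, d₁) at k; change d₁ ⟶ d₂ at g
      simp [collageComp]
      simp only [← FunctorToTypes.map_comp_apply, prod_comp, Category.id_comp, Category.comp_id]
      rfl
  | Sum.inl _, Sum.inr _, Sum.inl _, _, _, g, _ => (g : PEmpty).elim
  | Sum.inl _, Sum.inr _, Sum.inr _, Sum.inl _, _, _, h => (h : PEmpty).elim
  | Sum.inl c, Sum.inr d₁, Sum.inr d₂, Sum.inr d₃, k, g, h => by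
      change K.obj (op c, d₁) at k; change d₁ ⟶ d₂ at g; change d₂ ⟶ d₃ at h
      simp [collageComp]
      simp only [← FunctorToTypes.map_comp_apply, prod_comp, Category.id_comp, Category.comp_id]
      rfl
  | Sum.inr _, Sum.inl _, _, _, f, _, _ => (f : PEmpty).elim
  | Sum.inr _, Sum.inr _, Sum.inl _, _, _, g, _ => (g : PEmpty).elim
  | Sum.inr _, Sum.inr _, Sum.inr _, Sum.inl _, _, _, h => (h : PEmpty).elim
  | Sum.inr _, Sum.inr _, Sum.inr _, Sum.inr _, f, g, h => Category.assoc f g h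

/-- The collage of a profunctor `K` from `C` to `D`. -/
instance collageCategory (K : Cᵒᵖ × D ⥤ Type u) : Category.{u} (Collage K) where
  Hom x y := CollageHom K x y
  id x := collageId K x
  comp f g := collageComp K f g
  id_comp f := collage_id_comp K f
  comp_id f := collage_comp_id K f
  assoc f g h := collage_assoc K f g h

/-- A functor `p : E ⥤ B` is a discrete opfibration if every morphism out of the image of an
object `e` has a unique lift with domain `e`. -/
def IsDiscreteOpfib {E : Type*} {B : Type*} [Category E] [Category B] (p : E ⥤ B) : Prop :=
  ∀ ⦃e : E⦄ ⦃b : B⦄ (f : p.obj e ⟶ b),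
    ∃! eg : Σ e' : E, e ⟶ e',
      ∃ h : p.obj eg.1 = b, p.map eg.2 ≫ eqToHom h = f

section CollageMap

variable {C' D' : Type u} [Category.{u} C'] [Category.{u} D']
variable (K' : C'ᵒᵖ × D' ⥤ Type u) (K : Cᵒᵖ × D ⥤ Type u)
variable (p : C' ⥤ C) (q : D' ⥤ D)

/-- The object part of the collage functor induced by a strict morphism of profunctors. -/
def collageMapObj : Collage K' → Collage K
  | Sum.inl c' => Sum.inl (p.obj c')
  | Sum.inr d' => Sum.inr (q.obj d')

variable (φ : ∀ (c' : C') (d' : D'), K'.obj (op c', d') → K.obj (op (p.obj c'), q.obj d'))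

/-- The morphism part of the collage functor induced by a strict morphism of profunctors. -/
def collageMapMap : ∀ {x y : Collage K'}, CollageHom K' x y →
    CollageHom K (collageMapObj K' K p q x) (collageMapObj K' K p q y)
  | Sum.inl a, Sum.inl b, f => (p.map (f : a ⟶ b) : p.obj a ⟶ p.obj b)
  | Sum.inl c', Sum.inr d', k =>
      (φ c' d' (k : K'.obj (op c', d')) : K.obj (op (p.obj c'), q.obj d'))
  | Sum.inr _, Sum.inl _, f => (f : PEmpty).elim
  | Sum.inr a, Sum.inr b, f => (q.map (f : a ⟶ b) : q.obj a ⟶ q.obj b)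

variable (φnat : ∀ {c₁ c₂ : C'} {d₁ d₂ : D'} (f : c₂ ⟶ c₁) (g : d₁ ⟶ d₂)
  (k : K'.obj (op c₁, d₁)),
  φ c₂ d₂ (K'.map (f.op, g) k) = K.map ((p.map f).op, q.map g) (φ c₁ d₁ k))

/-- The collage functor `Coll(K') ⥤ Coll(K)` induced by a strict morphism `(p, q, φ)` of
profunctors: it acts by `p` on `C'`-objects and morphisms, by `q` on `D'`-objects and
morphisms, and by `φ` on heteromorphisms. -/
def collageMap : Collage K' ⥤ Collage K where
  obj x := collageMapObj K' K p q x
  map {x y} f := collageMapMap K' K p q φ f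
  map_id x := by
    match x with
    | Sum.inl c' => exact p.map_id c'
    | Sum.inr d' => exact q.map_id d'
  map_comp {x y z} f g := by
    match x, y, z, f, g with
    | Sum.inl a, Sum.inl b, Sum.inl c, f, g => exact p.map_comp (f : a ⟶ b) (g : b ⟶ c)
    | Sum.inl a, Sum.inl b, Sum.inr d', f, k =>
      have h := φnat (f : a ⟶ b) (𝟙 d') (k : K'.obj (op b, d'))
      rw [q.map_id] at h
      exact h
    | Sum.inl a, Sum.inr d₁, Sum.inr d₂, k, g =>
      have h := φnat (𝟙 a) (g : d₁ ⟶ d₂) (k : K'.obj (op a, d₁))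
      rw [p.map_id] at h
      exact h
    | Sum.inl _, Sum.inr _, Sum.inl _, _, g => exact (g : PEmpty).elim
    | Sum.inr _, Sum.inl _, _, f, _ => exact (f : PEmpty).elim
    | Sum.inr _, Sum.inr _, Sum.inl _, _, g => exact (g : PEmpty).elim
    | Sum.inr a, Sum.inr b, Sum.inr c, f, g => exact q.map_comp (f : a ⟶ b) (g : b ⟶ c)

theorem Function.bijective_iff_of_comp_eq_comp {α β γ δ : Type*} (e₁ : α ≃ γ) (e₂ : β ≃ δ)
    {f : α → β} {g : γ → δ} (h : e₂ ∘ f = g ∘ e₁) :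
    Function.Bijective f ↔ Function.Bijective g := by
  rw [← e₂.comp_bijective, h, e₁.bijective_comp]

theorem Sigma.mk_eq_mk_iff_comp_eqToHom {B : Type*} [Category B] {X Y Y' : B} (f : X ⟶ Y)
    (f' : X ⟶ Y') : (⟨Y, f⟩ : Σ Z, X ⟶ Z) = ⟨Y', f'⟩ ↔ ∃ h : Y = Y', f ≫ eqToHom h = f' := by
  constructor
  · rintro ⟨⟩
    exact ⟨rfl, by simp⟩
  · rintro ⟨rfl, rfl⟩
    simp

theorem Sigma.mk_eq_mk_iff_map_eqToHom {B : Type*} [Category B] (G : B ⥤ Type*) {Y Y' : B}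
    (y : G.obj Y) (y' : G.obj Y') :
    (⟨Y, y⟩ : Σ Z, G.obj Z) = ⟨Y', y'⟩ ↔ ∃ h : Y = Y', G.map (eqToHom h) y = y' := by
  constructor
  · rintro ⟨⟩
    exact ⟨rfl, by simp⟩
  · rintro ⟨rfl, rfl⟩
    simp

theorem isDiscreteOpfib_iff_star_bijective {E B : Type*} [Category E] [Category B] (F : E ⥤ B) :
    IsDiscreteOpfib F ↔ ∀ e, Function.Bijective (F.toPrefunctor.star e) := by
  refine forall_congr' fun e => ?_
  rw [Function.bijective_iff_existsUnique, Sigma.forall]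
  exact forall₂_congr fun _ _ =>
    existsUnique_congr fun _ => (Sigma.mk_eq_mk_iff_comp_eqToHom _ _).symm

/-- On the collage this is the part of the star of `collageMap` at `Sum.inl c'` lying over `D`. -/
def hetStarMap (c' : C') : (Σ d', K'.obj (op c', d')) → Σ d, K.obj (op (p.obj c'), d) :=
  Sigma.map q.obj (φ c')

theorem forall_existsUnique_hetLift_iff_hetStarMap_bijective (c' : C') :
    (∀ (d : D) (k : K.obj (op (p.obj c'), d)),
        ∃! dk : Σ d' : D', K'.obj (op c', d'),
          ∃ h : q.obj dk.1 = d, K.map (𝟙 (op (p.obj c')), eqToHom h) (φ c' dk.1 dk.2) = k) ↔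
      Function.Bijective (hetStarMap K' K p q φ c') := by
  rw [Function.bijective_iff_existsUnique, Sigma.forall]
  exact forall₂_congr fun _ _ => existsUnique_congr fun _ =>
    (Sigma.mk_eq_mk_iff_map_eqToHom ((Functor.curry.obj K).obj (op (p.obj c'))) _ _).symm

theorem collageMap_star_inl_bijective_iff (c' : C') :
    Function.Bijective ((collageMap K' K p q φ @φnat).toPrefunctor.star (Sum.inl c')) ↔
      Function.Bijective (p.toPrefunctor.star c') ∧
        Function.Bijective (hetStarMap K' K p q φ c') := by
  have h : Equiv.sumSigmaDistrib _ ∘ (collageMap K' K p q φ @φnat).toPrefunctor.star (Sum.inl c') =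
      Sum.map (p.toPrefunctor.star c') (hetStarMap K' K p q φ c') ∘ Equiv.sumSigmaDistrib _ := by
    funext x
    rcases x with ⟨c | d, f⟩ <;> rfl
  exact (Function.bijective_iff_of_comp_eq_comp _ _ h).trans Sum.map_bijective

theorem collageMap_star_inr_bijective_iff (d' : D') :
    Function.Bijective ((collageMap K' K p q φ @φnat).toPrefunctor.star (Sum.inr d')) ↔
      Function.Bijective (q.toPrefunctor.star d') := by
  have h : Equiv.sumSigmaDistrib _ ∘ (collageMap K' K p q φ @φnat).toPrefunctor.star (Sum.inr d') =
      Sum.map (Sigma.map p.obj fun _ f => (f : PEmpty).elim) (q.toPrefunctor.star d') ∘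
        Equiv.sumSigmaDistrib _ := by
    funext x
    rcases x with ⟨c | d, f⟩ <;> rfl
  refine (Function.bijective_iff_of_comp_eq_comp _ _ h).trans
    (Sum.map_bijective.trans (and_iff_right ?_))
  exact ⟨fun ⟨_, f⟩ => (f : PEmpty).elim, fun ⟨_, f⟩ => (f : PEmpty).elim⟩

/-- `(C', D', K', p, q, φ)` is a discrete opfibration over the profunctor `K` if and only if
the induced collage functor `Coll(K') ⥤ Coll(K)` is a discrete opfibration of categories. -/
theorem dopfOverProf_iff_collageMap_isDiscreteOpfib :
    (IsDiscreteOpfib p ∧ IsDiscreteOpfib q ∧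
      ∀ (c' : C') (d : D) (k : K.obj (op (p.obj c'), d)),
        ∃! dk : Σ d' : D', K'.obj (op c', d'),
          ∃ h : q.obj dk.1 = d,
            K.map (𝟙 (op (p.obj c')), eqToHom h) (φ c' dk.1 dk.2) = k) ↔
      IsDiscreteOpfib (collageMap K' K p q φ @φnat) := by
  simp only [isDiscreteOpfib_iff_star_bijective,
    forall_existsUnique_hetLift_iff_hetStarMap_bijective]
  have hinl := collageMap_star_inl_bijective_iff K' K p q φ φnat
  have hinr := collageMap_star_inr_bijective_iff K' K p q φ φnat
  constructor
  · rintro ⟨hp, hq, hφ⟩ (c' | d')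
    · exact (hinl c').2 ⟨hp c', hφ c'⟩
    · exact (hinr d').2 (hq d')
  · intro h
    exact ⟨fun c' => ((hinl c').1 (h (Sum.inl c'))).1, fun d' => (hinr d').1 (h (Sum.inr d')),
      fun c' => ((hinl c').1 (h (Sum.inl c'))).2⟩

end CollageMap
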